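/- arXiv:2008.03185 — 6 statements merged into one kernel-verified Lean document; each statement's English description precedes it below -/
import Mathlib

section
/- Let 2 ≤ k ≤ N−1. Assume the step ratios satisfy 0 < r_i < (3+√17)/2 for 2 ≤ i ≤ N. Then for any real numbers w_{k−1}, w_k one has 2 w_k · Σ_{j=1}^{k} b_{k−j}^{(k)} w_j ≥ r_{k+1}/((1+r_{k+1}) τ_k) · w_k² − r_k/((1+r_k) τ_{k−1}) · w_{k−1}² + ( (2+4r_k−r_k²)/(1+r_k) − r_{k+1}/(1+r_{k+1}) ) · w_k²/τ_k, where the left-hand sum equals b_0^{(k)} w_k + b_1^{(k)} w_{k−1}. -/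
/-!
With `r = τ_k / τ_{k-1}`, the difference of the two sides is exactly
`r² (w_k - w_{k-1})² / ((1 + r) τ_k) ≥ 0`; the `r_{k+1}` terms cancel.
-/

open Finset

/-- BDF2 kernels `b_j^{(n)}` (assuming `r 1 = 0`, so the `n = 1` case
`b_0^{(1)} = 1/τ_1` is subsumed by the general formula). -/
noncomputable def bk (τ r : ℕ → ℝ) (n j : ℕ) : ℝ :=
  if j = 0 then (1 + 2 * r n) / (τ n * (1 + r n))
  else if j = 1 then -(r n) ^ 2 / (τ n * (1 + r n))
  else 0

theorem bk_zero (τ r : ℕ → ℝ) (n : ℕ) :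
    bk τ r n 0 = (1 + 2 * r n) / (τ n * (1 + r n)) := by
  simp [bk]

theorem bk_one (τ r : ℕ → ℝ) (n : ℕ) :
    bk τ r n 1 = -(r n) ^ 2 / (τ n * (1 + r n)) := by
  simp [bk]

theorem bk_of_two_le (τ r : ℕ → ℝ) {n j : ℕ} (hj : 2 ≤ j) : bk τ r n j = 0 := by
  simp [bk, show j ≠ 0 by omega, show j ≠ 1 by omega]

theorem sum_Icc_bk_mul {k : ℕ} (hk : 2 ≤ k) (τ r w : ℕ → ℝ) :
    ∑ j ∈ Icc 1 k, bk τ r k (k - j) * w j = bk τ r k 0 * w k + bk τ r k 1 * w (k - 1) := by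
  have hsub : ({k, k - 1} : Finset ℕ) ⊆ Icc 1 k := by
    intro x hx
    rw [mem_insert, mem_singleton] at hx
    rw [mem_Icc]
    omega
  rw [← sum_subset hsub, sum_pair (show k ≠ k - 1 by omega), Nat.sub_self,
    Nat.sub_sub_self (show 1 ≤ k by omega)]
  intro j hj hj'
  simp only [mem_Icc, mem_insert, mem_singleton, not_or] at hj hj'
  rw [bk_of_two_le τ r (by omega), zero_mul]

theorem bdf2_two_step_energy_identity {τ₀ τ₁ r : ℝ} (hτ₀ : 0 < τ₀) (hτ₁ : 0 < τ₁)
    (hr : r = τ₁ / τ₀) (s x y : ℝ) :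
    2 * x * ((1 + 2 * r) / (τ₁ * (1 + r)) * x + -r ^ 2 / (τ₁ * (1 + r)) * y) =
      s / ((1 + s) * τ₁) * x ^ 2 - r / ((1 + r) * τ₀) * y ^ 2
        + ((2 + 4 * r - r ^ 2) / (1 + r) - s / (1 + s)) * x ^ 2 / τ₁
        + r ^ 2 * (x - y) ^ 2 / ((1 + r) * τ₁) := by
  rw [← div_div s (1 + s) τ₁]
  generalize s / (1 + s) = c
  subst hr
  field_simp
  ring

theorem stmt0_general (N : ℕ) (τ r : ℕ → ℝ)
    (hτ : ∀ k, 1 ≤ k → k ≤ N → 0 < τ k)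
    (hr : ∀ k, 2 ≤ k → k ≤ N → r k = τ k / τ (k - 1))
    (k : ℕ) (hk2 : 2 ≤ k) (hkN : k + 1 ≤ N)
    (w : ℕ → ℝ) :
    2 * w k * (∑ j ∈ Finset.Icc 1 k, bk τ r k (k - j) * w j) ≥
      r (k + 1) / ((1 + r (k + 1)) * τ k) * (w k) ^ 2
        - r k / ((1 + r k) * τ (k - 1)) * (w (k - 1)) ^ 2
        + ((2 + 4 * r k - (r k) ^ 2) / (1 + r k)
            - r (k + 1) / (1 + r (k + 1))) * (w k) ^ 2 / τ k := by
  have hτk : 0 < τ k := hτ k (by omega) (by omega)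
  have hτk₁ : 0 < τ (k - 1) := hτ (k - 1) (by omega) (by omega)
  have hrk : r k = τ k / τ (k - 1) := hr k hk2 (by omega)
  have hrk₀ : 0 < r k := hrk ▸ div_pos hτk hτk₁
  rw [sum_Icc_bk_mul hk2, bk_zero, bk_one,
    bdf2_two_step_energy_identity hτk₁ hτk hrk (r (k + 1))]
  exact le_add_of_nonneg_right (by positivity)

theorem stmt0 (N : ℕ) (τ r : ℕ → ℝ)
    (hτ : ∀ k, 1 ≤ k → k ≤ N → 0 < τ k)
    (hr1 : r 1 = 0)
    (hr : ∀ k, 2 ≤ k → k ≤ N → r k = τ k / τ (k - 1))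
    (hratio : ∀ i, 2 ≤ i → i ≤ N → 0 < r i ∧ r i < (3 + Real.sqrt 17) / 2)
    (k : ℕ) (hk2 : 2 ≤ k) (hkN : k + 1 ≤ N)
    (w : ℕ → ℝ) :
    2 * w k * (∑ j ∈ Finset.Icc 1 k, bk τ r k (k - j) * w j) ≥
      r (k + 1) / ((1 + r (k + 1)) * τ k) * (w k) ^ 2
        - r k / ((1 + r k) * τ (k - 1)) * (w (k - 1)) ^ 2
        + ((2 + 4 * r k - (r k) ^ 2) / (1 + r k)
            - r (k + 1) / (1 + r (k + 1))) * (w k) ^ 2 / τ k :=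
  stmt0_general N τ r hτ hr k hk2 hkN w
end

section
/- Let 2 ≤ n ≤ N−1 and assume the step ratios satisfy 0 < r_k < (3+√17)/2 for 2 ≤ k ≤ N. Then for any real numbers w_1, …, w_n, not all zero, one has Σ_{k=1}^{n} w_k Σ_{j=1}^{k} b_{k−j}^{(k)} w_j ≥ (1/2) Σ_{k=1}^{n} ( (2+4r_k−r_k²)/(1+r_k) − r_{k+1}/(1+r_{k+1}) ) · w_k²/τ_k > 0; in particular the BDF2 kernels are positive definite. -/
/-!
Completing the square gives, for each `k`,
`w_k (b_0^{(k)} w_k + b_1^{(k)} w_{k-1})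
  = ½ c_k w_k²/τ_k + E_{k+1} w_k² − E_k w_{k-1}² + E_k (w_k − w_{k-1})²`
with `c_k = lowerCoeff r k` and `E_k = energyWeight τ r k = r_k² / (2 τ_k (1 + r_k))`.
The middle terms telescope (`E_1 = 0` as `r_1 = 0`), so the quadratic form equals the lower bound
plus nonnegative terms. Positivity of `c_k` comes from `ρ = (3 + √17)/2` being the positive root
of `x² = 3x + 2`.
-/

open Finset

noncomputable def lowerCoeff (r : ℕ → ℝ) (k : ℕ) : ℝ :=
  (2 + 4 * r k - r k ^ 2) / (1 + r k) - r (k + 1) / (1 + r (k + 1))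

noncomputable def energyWeight (τ r : ℕ → ℝ) (k : ℕ) : ℝ :=
  r k ^ 2 / (2 * τ k * (1 + r k))

lemma bdf2_step_identity {τ τ' r r' x y : ℝ} (hτ : 0 < τ) (hr : 0 ≤ r) (hr' : 0 < r')
    (hτ' : τ' = r' * τ) :
    x * ((1 + 2 * r) / (τ * (1 + r)) * x + -r ^ 2 / (τ * (1 + r)) * y)
      = 1 / 2 * ((2 + 4 * r - r ^ 2) / (1 + r) - r' / (1 + r')) * x ^ 2 / τ
        + r' ^ 2 / (2 * τ' * (1 + r')) * x ^ 2 - r ^ 2 / (2 * τ * (1 + r)) * y ^ 2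
        + r ^ 2 / (2 * τ * (1 + r)) * (x - y) ^ 2 := by
  subst hτ'
  have : 0 < 1 + r := by linarith
  have : 0 < 1 + r' := by linarith
  field_simp
  ring

lemma lowerCoeff_num_pos {ρ a b : ℝ} (hρ : ρ ^ 2 = 3 * ρ + 2) (hρ0 : 0 < ρ)
    (ha0 : 0 ≤ a) (ha : a < ρ) (hb0 : 0 ≤ b) (hb : b < ρ) :
    0 < (2 + 4 * a - a ^ 2) / (1 + a) - b / (1 + b) := by
  -- at `a = b = ρ` both terms equal `ρ / (1 + ρ)`, since `2 + 4ρ - ρ² = ρ`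
  have hleft : ρ / (1 + ρ) < (2 + 4 * a - a ^ 2) / (1 + a) := by
    rw [div_lt_div_iff₀ (by linarith) (by linarith)]
    nlinarith [mul_pos (sub_pos.2 ha) hρ0, mul_nonneg (sub_pos.2 ha).le ha0,
      mul_nonneg (mul_nonneg (sub_pos.2 ha).le ha0) hρ0.le]
  have hright : b / (1 + b) < ρ / (1 + ρ) := by
    rw [div_lt_div_iff₀ (by linarith) (by linarith)]
    linarith
  linarith

section BDF2

variable {N : ℕ} {τ r : ℕ → ℝ}

lemma ratio_succ_pos_and_step_eq (hτ : ∀ k, 1 ≤ k → k ≤ N → 0 < τ k)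
    (hr : ∀ k, 2 ≤ k → k ≤ N → r k = τ k / τ (k - 1)) {k : ℕ} (hk : 1 ≤ k) (hkN : k + 1 ≤ N) :
    0 < r (k + 1) ∧ τ (k + 1) = r (k + 1) * τ k := by
  have hτk := hτ k hk (by omega)
  have hrk : r (k + 1) = τ (k + 1) / τ k := hr (k + 1) (by omega) hkN
  exact ⟨hrk ▸ div_pos (hτ (k + 1) (by omega) hkN) hτk, by rw [hrk, div_mul_cancel₀ _ hτk.ne']⟩

lemma ratio_nonneg (hτ : ∀ k, 1 ≤ k → k ≤ N → 0 < τ k) (hr1 : r 1 = 0)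
    (hr : ∀ k, 2 ≤ k → k ≤ N → r k = τ k / τ (k - 1)) {k : ℕ} (hk : 1 ≤ k) (hkN : k ≤ N) :
    0 ≤ r k := by
  obtain rfl | ⟨m, rfl⟩ : k = 1 ∨ ∃ m, k = m + 2 :=
    (Nat.lt_or_ge k 2).imp (by omega) fun h => ⟨k - 2, by omega⟩
  · exact hr1.ge
  · exact (ratio_succ_pos_and_step_eq hτ hr (k := m + 1) (by omega) hkN).1.le

lemma energyWeight_nonneg (hτ : ∀ k, 1 ≤ k → k ≤ N → 0 < τ k) (hr1 : r 1 = 0)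
    (hr : ∀ k, 2 ≤ k → k ≤ N → r k = τ k / τ (k - 1)) {k : ℕ} (hk : 1 ≤ k) (hkN : k ≤ N) :
    0 ≤ energyWeight τ r k := by
  have := hτ k hk hkN
  have := ratio_nonneg hτ hr1 hr hk hkN
  unfold energyWeight
  positivity

lemma sum_bk_mul_eq (hr1 : r 1 = 0) (w : ℕ → ℝ) {k : ℕ} (hk : 1 ≤ k) :
    ∑ j ∈ Icc 1 k, bk τ r k (k - j) * w j = bk τ r k 0 * w k + bk τ r k 1 * w (k - 1) := by
  obtain rfl | ⟨m, rfl⟩ : k = 1 ∨ ∃ m, k = m + 2 :=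
    (Nat.lt_or_ge k 2).imp (by omega) fun h => ⟨k - 2, by omega⟩
  · simp [bk, hr1]
  · rw [sum_Icc_succ_top (by omega), sum_Icc_succ_top (by omega),
      sum_eq_zero fun j hj => by
        have : m + 1 + 1 - j ≠ 0 ∧ m + 1 + 1 - j ≠ 1 := by
          simp only [mem_Icc] at hj; omega
        simp [bk, this.1, this.2]]
    simp only [Nat.sub_self, show m + 1 + 1 - (m + 1) = 1 by omega, zero_add,
      show m + 2 - 1 = m + 1 by omega]
    ring

lemma quadratic_form_eq (hτ : ∀ k, 1 ≤ k → k ≤ N → 0 < τ k) (hr1 : r 1 = 0)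
    (hr : ∀ k, 2 ≤ k → k ≤ N → r k = τ k / τ (k - 1)) (w : ℕ → ℝ) :
    ∀ n, n + 1 ≤ N →
      ∑ k ∈ Icc 1 n, w k * ∑ j ∈ Icc 1 k, bk τ r k (k - j) * w j
        = 1 / 2 * ∑ k ∈ Icc 1 n, lowerCoeff r k * w k ^ 2 / τ k
          + energyWeight τ r (n + 1) * w n ^ 2
          + ∑ k ∈ Icc 1 n, energyWeight τ r k * (w k - w (k - 1)) ^ 2
  | 0, _ => by simp [energyWeight, hr1]
  | n + 1, hn => by
    obtain ⟨hr', hτ'⟩ := ratio_succ_pos_and_step_eq hτ hr (k := n + 1) (by omega) hn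
    have h1 : 1 ≤ n + 1 := by omega
    rw [sum_Icc_succ_top h1, sum_bk_mul_eq hr1 w h1, sum_Icc_succ_top h1, sum_Icc_succ_top h1,
      quadratic_form_eq hτ hr1 hr w n (by omega), bk, bk, if_pos rfl, if_neg one_ne_zero,
      if_pos rfl,
      bdf2_step_identity (hτ (n + 1) (by omega) (by omega))
        (ratio_nonneg hτ hr1 hr (by omega) (by omega)) hr' hτ', lowerCoeff,
      energyWeight, energyWeight, Nat.add_sub_cancel]
    ring

lemma lowerCoeff_pos (hτ : ∀ k, 1 ≤ k → k ≤ N → 0 < τ k) (hr1 : r 1 = 0)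
    (hr : ∀ k, 2 ≤ k → k ≤ N → r k = τ k / τ (k - 1))
    (hratio : ∀ k, 2 ≤ k → k ≤ N → 0 < r k ∧ r k < (3 + Real.sqrt 17) / 2)
    {k : ℕ} (hk : 1 ≤ k) (hkN : k + 1 ≤ N) : 0 < lowerCoeff r k := by
  have hs : Real.sqrt 17 ^ 2 = 17 := Real.sq_sqrt (by norm_num)
  have hρ : ((3 + Real.sqrt 17) / 2) ^ 2 = 3 * ((3 + Real.sqrt 17) / 2) + 2 := by
    linear_combination hs / 4
  have hρ0 : 0 < (3 + Real.sqrt 17) / 2 := by positivity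
  have hrk : r k < (3 + Real.sqrt 17) / 2 := by
    rcases Nat.lt_or_ge k 2 with h | h
    · rwa [show k = 1 by omega, hr1]
    · exact (hratio k h (by omega)).2
  have hrk1 := hratio (k + 1) (by omega) hkN
  exact lowerCoeff_num_pos hρ hρ0 (ratio_nonneg hτ hr1 hr hk (by omega)) hrk hrk1.1.le hrk1.2

end BDF2

theorem stmt1_general (N : ℕ) (τ r : ℕ → ℝ)
    (hτ : ∀ k, 1 ≤ k → k ≤ N → 0 < τ k)
    (hr1 : r 1 = 0)
    (hr : ∀ k, 2 ≤ k → k ≤ N → r k = τ k / τ (k - 1))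
    (hratio : ∀ k, 2 ≤ k → k ≤ N → 0 < r k ∧ r k < (3 + Real.sqrt 17) / 2)
    (n : ℕ) (hnN : n + 1 ≤ N)
    (w : ℕ → ℝ) (hw : ∃ k ∈ Finset.Icc 1 n, w k ≠ 0) :
    (∑ k ∈ Finset.Icc 1 n, w k * ∑ j ∈ Finset.Icc 1 k, bk τ r k (k - j) * w j) ≥
      (1 / 2) * ∑ k ∈ Finset.Icc 1 n,
        ((2 + 4 * r k - (r k) ^ 2) / (1 + r k)
          - r (k + 1) / (1 + r (k + 1))) * (w k) ^ 2 / τ k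
    ∧ 0 < (1 / 2) * ∑ k ∈ Finset.Icc 1 n,
        ((2 + 4 * r k - (r k) ^ 2) / (1 + r k)
          - r (k + 1) / (1 + r (k + 1))) * (w k) ^ 2 / τ k := by
  have hpos : ∀ k ∈ Icc 1 n, 0 < lowerCoeff r k ∧ 0 < τ k := fun k hk => by
    rw [mem_Icc] at hk
    exact ⟨lowerCoeff_pos hτ hr1 hr hratio hk.1 (by omega), hτ k hk.1 (by omega)⟩
  have hlower : 1 / 2 * ∑ k ∈ Icc 1 n, lowerCoeff r k * w k ^ 2 / τ k
      ≤ ∑ k ∈ Icc 1 n, w k * ∑ j ∈ Icc 1 k, bk τ r k (k - j) * w j := by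
    rw [quadratic_form_eq hτ hr1 hr w n hnN]
    have hlast := mul_nonneg (energyWeight_nonneg hτ hr1 hr (by omega) hnN) (sq_nonneg (w n))
    have hjumps : 0 ≤ ∑ k ∈ Icc 1 n, energyWeight τ r k * (w k - w (k - 1)) ^ 2 :=
      sum_nonneg fun k hk => by
        rw [mem_Icc] at hk
        exact mul_nonneg (energyWeight_nonneg hτ hr1 hr hk.1 (by omega)) (sq_nonneg _)
    linarith
  obtain ⟨k, hk, hwk⟩ := hw
  refine ⟨hlower, mul_pos one_half_pos (sum_pos' (fun j hj => ?_) ⟨k, hk, ?_⟩)⟩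
  · obtain ⟨hc, hτj⟩ := hpos j hj
    positivity
  · obtain ⟨hc, hτk⟩ := hpos k hk
    positivity

theorem stmt1 (N : ℕ) (τ r : ℕ → ℝ)
    (hτ : ∀ k, 1 ≤ k → k ≤ N → 0 < τ k)
    (hr1 : r 1 = 0)
    (hr : ∀ k, 2 ≤ k → k ≤ N → r k = τ k / τ (k - 1))
    (hratio : ∀ k, 2 ≤ k → k ≤ N → 0 < r k ∧ r k < (3 + Real.sqrt 17) / 2)
    (n : ℕ) (hn2 : 2 ≤ n) (hnN : n + 1 ≤ N)
    (w : ℕ → ℝ) (hw : ∃ k ∈ Finset.Icc 1 n, w k ≠ 0) :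
    (∑ k ∈ Finset.Icc 1 n, w k * ∑ j ∈ Finset.Icc 1 k, bk τ r k (k - j) * w j) ≥
      (1 / 2) * ∑ k ∈ Finset.Icc 1 n,
        ((2 + 4 * r k - (r k) ^ 2) / (1 + r k)
          - r (k + 1) / (1 + r (k + 1))) * (w k) ^ 2 / τ k
    ∧ 0 < (1 / 2) * ∑ k ∈ Finset.Icc 1 n,
        ((2 + 4 * r k - (r k) ^ 2) / (1 + r k)
          - r (k + 1) / (1 + r (k + 1))) * (w k) ^ 2 / τ k :=
  stmt1_general N τ r hτ hr1 hr hratio n hnN w hw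
end

section
/- For every 1 ≤ n ≤ N and every sequence of real numbers v^0, v^1, …, v^n, one has Σ_{j=1}^{n} θ_{n−j}^{(n)} D_2 v^j = v^n − v^{n−1}, where D_2 v^j := Σ_{k=1}^{j} b_{j−k}^{(j)} (v^k − v^{k−1}) is the variable-step BDF2 formula. -/
open Finset

/-- DOC kernels: `th τ r n m = θ_m^{(n)}`, i.e. `θ_{n-k}^{(n)}` with `m = n - k`. -/
noncomputable def th (τ r : ℕ → ℝ) (n : ℕ) : ℕ → ℝ
  | 0 => 1 / bk τ r n 0
  | m + 1 => -(1 / bk τ r (n - (m + 1)) 0) *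
      ∑ i ∈ (Finset.range (m + 1)).attach,
        th τ r n i.1 * bk τ r (n - i.1) (m + 1 - i.1)
  decreasing_by exact Finset.mem_range.mp i.2

/-- The variable-step BDF2 formula `D_2 v^j := Σ_{k=1}^{j} b_{j-k}^{(j)} (v^k − v^{k-1})`. -/
noncomputable def D2 (τ r : ℕ → ℝ) (v : ℕ → ℝ) (j : ℕ) : ℝ :=
  ∑ k ∈ Finset.Icc 1 j, bk τ r j (j - k) * (v k - v (k - 1))

/-! The DOC kernels are built so that `Σ_{j=k}^{n} θ_{n-j}^{(n)} b_{j-k}^{(j)} = δ_{kn}`; summing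
the BDF2 formula against them and exchanging the two sums therefore leaves only the increment
`v^n - v^{n-1}`. -/

lemma bk_zero_pos {τ r : ℕ → ℝ} {k : ℕ} (hτ : 0 < τ k) (hr : 0 ≤ r k) : 0 < bk τ r k 0 := by
  rw [bk, if_pos rfl]
  positivity

/-- The recursion defining `th`, in the paper's indexing `θ_{n-k}^{(n)}`. -/
lemma th_sub_of_lt (τ r : ℕ → ℝ) {n k : ℕ} (hkn : k < n) :
    th τ r n (n - k) =
      -(1 / bk τ r k 0) * ∑ j ∈ Ioc k n, th τ r n (n - j) * bk τ r j (j - k) := by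
  obtain ⟨m, hm⟩ : ∃ m, n - k = m + 1 := ⟨n - k - 1, by omega⟩
  rw [hm, th, sum_attach (range (m + 1)) fun i => th τ r n i * bk τ r (n - i) (m + 1 - i),
    show n - (m + 1) = k by omega]
  congr 1
  refine sum_nbij' (n - ·) (n - ·) ?_ ?_ ?_ ?_ ?_ <;> intro j hj <;>
    simp only [mem_range, mem_Ioc] at hj ⊢
  · omega
  · omega
  · omega
  · omega
  · rw [show n - j - k = m + 1 - j by omega, show n - (n - j) = j by omega]

lemma sum_th_mul_bk {τ r : ℕ → ℝ} {n k : ℕ} (hkn : k ≤ n) (hb : bk τ r k 0 ≠ 0) :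
    ∑ j ∈ Icc k n, th τ r n (n - j) * bk τ r j (j - k) = if k = n then 1 else 0 := by
  rw [← Ioc_insert_left hkn, sum_insert left_notMem_Ioc, Nat.sub_self]
  rcases hkn.lt_or_eq with hlt | rfl
  · rw [th_sub_of_lt τ r hlt, if_neg hlt.ne]
    field_simp
    ring
  · rw [Ioc_self, sum_empty, add_zero, Nat.sub_self, th, if_pos rfl]
    exact one_div_mul_cancel hb

lemma sum_th_mul_D2 {τ r : ℕ → ℝ} {n : ℕ} (hn : 1 ≤ n)
    (hb : ∀ k ∈ Icc 1 n, bk τ r k 0 ≠ 0) (v : ℕ → ℝ) :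
    ∑ j ∈ Icc 1 n, th τ r n (n - j) * D2 τ r v j = v n - v (n - 1) := by
  have hswap : ∀ j k, j ∈ Icc 1 n ∧ k ∈ Icc 1 j ↔ j ∈ Icc k n ∧ k ∈ Icc 1 n := by
    intro j k
    simp only [mem_Icc]
    omega
  have hinner : ∀ k ∈ Icc 1 n,
      ∑ j ∈ Icc k n, th τ r n (n - j) * (bk τ r j (j - k) * (v k - v (k - 1))) =
        if k = n then v k - v (k - 1) else 0 := by
    intro k hk
    simp_rw [← mul_assoc, ← sum_mul, sum_th_mul_bk (mem_Icc.mp hk).2 (hb k hk), ite_mul,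
      one_mul, zero_mul]
  simp only [D2, mul_sum]
  rw [sum_comm' hswap, sum_congr rfl hinner, sum_ite_eq', if_pos (mem_Icc.mpr ⟨hn, le_rfl⟩)]

theorem stmt3 (N : ℕ) (τ r : ℕ → ℝ)
    (hτ : ∀ k, 1 ≤ k → k ≤ N → 0 < τ k)
    (hr1 : r 1 = 0)
    (hr : ∀ k, 2 ≤ k → k ≤ N → r k = τ k / τ (k - 1))
    (n : ℕ) (hn1 : 1 ≤ n) (hnN : n ≤ N) (v : ℕ → ℝ) :
    ∑ j ∈ Finset.Icc 1 n, th τ r n (n - j) * D2 τ r v j = v n - v (n - 1) := by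
  refine sum_th_mul_D2 hn1 (fun k hk => (bk_zero_pos ?_ ?_).ne') v <;>
    obtain ⟨hk1, hkn⟩ := mem_Icc.mp hk
  · exact hτ k hk1 (hkn.trans hnN)
  · rcases hk1.eq_or_lt with rfl | hk2
    · exact hr1.ge
    · rw [hr k hk2 (hkn.trans hnN)]
      exact div_nonneg (hτ k hk1 (hkn.trans hnN)).le (hτ (k - 1) (by omega) (by omega)).le
end

section
/- Assume the step ratios satisfy 0 < r_k < (3+√17)/2 for 2 ≤ k ≤ N. Then for every 1 ≤ n ≤ N one has Σ_{j=1}^{n} θ_{n−j}^{(n)} = τ_n, and consequently Σ_{k=1}^{n} Σ_{j=1}^{k} θ_{k−j}^{(k)} = t_n, where t_n := Σ_{k=1}^{n} τ_k. -/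
open Finset

/-! Since `b_j^{(n)} = 0` for `j ≥ 2`, the DOC recursion has a single term, and it shifts to
`θ_{m+1}^{(n+1)} = -(b_1^{(n+1)} / b_0^{(n+1)}) θ_m^{(n)}`. Hence `S_n := ∑_j θ_{n-j}^{(n)}` obeys
`S_{n+1} = 1 / b_0^{(n+1)} - (b_1^{(n+1)} / b_0^{(n+1)}) S_n`, and `S_n = τ_n` follows by induction
from `r_{n+1} τ_n = τ_{n+1}`. -/

lemma th_succ (τ r : ℕ → ℝ) (n m : ℕ) :
    th τ r n (m + 1) = -(1 / bk τ r (n - (m + 1)) 0) * (th τ r n m * bk τ r (n - m) 1) := by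
  rw [th, sum_attach (range (m + 1)) fun i => th τ r n i * bk τ r (n - i) (m + 1 - i),
    sum_eq_single_of_mem m (self_mem_range_succ m)]
  · simp
  · intro i hi him
    have : 2 ≤ m + 1 - i := by grind
    simp [bk, show m + 1 - i ≠ 0 by omega, show m + 1 - i ≠ 1 by omega]

lemma th_succ_succ (τ r : ℕ → ℝ) (n m : ℕ) :
    th τ r (n + 1) (m + 1) = -(bk τ r (n + 1) 1 / bk τ r (n + 1) 0) * th τ r n m := by
  induction m with
  | zero => rw [th_succ, th, th]; simp; ring
  | succ m ih =>
    rw [th_succ, ih, th_succ, show n + 1 - (m + 1 + 1) = n - (m + 1) by omega,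
      show n + 1 - (m + 1) = n - m by omega]
    ring

lemma sum_Icc_sub_eq_sum_range {M : Type*} [AddCommMonoid M] (f : ℕ → M) (n : ℕ) :
    ∑ j ∈ Icc 1 n, f (n - j) = ∑ m ∈ range n, f m := by
  rw [← Ico_add_one_right_eq_Icc, sum_Ico_eq_sum_range, ← sum_range_reflect]
  exact sum_congr rfl fun j hj => by congr 1; grind

lemma inv_bk_zero_sub_ratio_mul (τ r : ℕ → ℝ) (n : ℕ) (t : ℝ) (hτ : 0 < τ n) (ht : 0 < t)
    (hr : r n = τ n / t) :
    1 / bk τ r n 0 - bk τ r n 1 / bk τ r n 0 * t = τ n := by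
  simp only [bk, if_pos, one_ne_zero, if_false, hr]
  field_simp
  ring

lemma sum_range_th_eq (N : ℕ) (τ r : ℕ → ℝ)
    (hτ : ∀ k, 1 ≤ k → k ≤ N → 0 < τ k)
    (hr1 : r 1 = 0)
    (hr : ∀ k, 2 ≤ k → k ≤ N → r k = τ k / τ (k - 1))
    (n : ℕ) (hn1 : 1 ≤ n) (hnN : n ≤ N) :
    ∑ m ∈ range n, th τ r n m = τ n := by
  induction n, hn1 using Nat.le_induction with
  | base => simp [th, bk, hr1]
  | succ k hk ih =>
    rw [sum_range_succ', ← sum_congr rfl fun m _ => (th_succ_succ τ r k m).symm, ← mul_sum,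
      ih (by omega), th, add_comm, neg_mul, ← sub_eq_add_neg]
    exact inv_bk_zero_sub_ratio_mul τ r (k + 1) (τ k) (hτ _ (by omega) hnN) (hτ k hk (by omega))
      (hr _ (by omega) hnN)

theorem stmt5_general (N : ℕ) (τ r : ℕ → ℝ)
    (hτ : ∀ k, 1 ≤ k → k ≤ N → 0 < τ k)
    (hr1 : r 1 = 0)
    (hr : ∀ k, 2 ≤ k → k ≤ N → r k = τ k / τ (k - 1))
    (n : ℕ) (hn1 : 1 ≤ n) (hnN : n ≤ N) :
    (∑ j ∈ Finset.Icc 1 n, th τ r n (n - j) = τ n) ∧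
      (∑ k ∈ Finset.Icc 1 n, ∑ j ∈ Finset.Icc 1 k, th τ r k (k - j)
        = ∑ k ∈ Finset.Icc 1 n, τ k) := by
  have sum_th (k : ℕ) (hk : k ∈ Icc 1 n) : ∑ j ∈ Icc 1 k, th τ r k (k - j) = τ k := by
    rw [sum_Icc_sub_eq_sum_range (th τ r k)]
    exact sum_range_th_eq N τ r hτ hr1 hr k (mem_Icc.1 hk).1 ((mem_Icc.1 hk).2.trans hnN)
  exact ⟨sum_th n (mem_Icc.2 ⟨hn1, le_rfl⟩), sum_congr rfl sum_th⟩

theorem stmt5 (N : ℕ) (τ r : ℕ → ℝ)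
    (hτ : ∀ k, 1 ≤ k → k ≤ N → 0 < τ k)
    (hr1 : r 1 = 0)
    (hr : ∀ k, 2 ≤ k → k ≤ N → r k = τ k / τ (k - 1))
    (hratio : ∀ k, 2 ≤ k → k ≤ N → 0 < r k ∧ r k < (3 + Real.sqrt 17) / 2)
    (n : ℕ) (hn1 : 1 ≤ n) (hnN : n ≤ N) :
    (∑ j ∈ Finset.Icc 1 n, th τ r n (n - j) = τ n) ∧
      (∑ k ∈ Finset.Icc 1 n, ∑ j ∈ Finset.Icc 1 k, th τ r k (k - j)
        = ∑ k ∈ Finset.Icc 1 n, τ k) :=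
  stmt5_general N τ r hτ hr1 hr n hn1 hnN
end

section
/- For any vectors v, w ∈ ℝ² there exists a symmetric 2×2 real matrix Q such that f(v) − f(w) = Q (v − w) and every eigenvalue λ of Q satisfies −1/8 ≤ λ ≤ 1 (equivalently, −(1/8)|x|² ≤ xᵀQx ≤ |x|² for all x ∈ ℝ²). Consequently, |f(v) − f(w)| ≤ |v − w| for all v, w ∈ ℝ². -/
/-!
With `a = 1 + |v|²`, `b = 1 + |w|²` and `s = v + w` one has `a - b = s ⬝ (v - w)`, so
`f(v) - f(w) = v / a - w / b = Q (v - w)` for the symmetric matrix `Q = ((a + b) I - s sᵀ) / (2ab)`.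
Its quadratic form is `((a + b)|x|² - (s ⬝ x)²) / (2ab)`: the upper bound `|x|²` follows from
`a, b ≥ 1`, and the lower bound `-|x|²/8` from Cauchy–Schwarz, which reduces it to
`(v ⬝ w - 3)² ≥ 0`. A symmetric matrix whose quadratic form lies between `-|x|²` and `|x|²`
is non-expanding, by polarization.
-/

open Finset Matrix

/-- The nonlinear force vector `f(u) := u/(1+|u|²)` for `u ∈ ℝ²`. -/
noncomputable def fvec (u : Fin 2 → ℝ) : Fin 2 → ℝ :=
  fun i => u i / (1 + ∑ j, (u j) ^ 2)

section DotProduct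

variable {ι : Type*} [Fintype ι]

lemma dotProduct_self_nonneg (v : ι → ℝ) : 0 ≤ v ⬝ᵥ v :=
  sum_nonneg fun i _ => mul_self_nonneg (v i)

lemma sum_sq_eq_dotProduct_self (v : ι → ℝ) : ∑ i, v i ^ 2 = v ⬝ᵥ v := by
  simp only [dotProduct, sq]

lemma dotProduct_sq_le (v w : ι → ℝ) : (v ⬝ᵥ w) ^ 2 ≤ (v ⬝ᵥ v) * (w ⬝ᵥ w) := by
  simpa only [dotProduct, sq] using sum_mul_sq_le_sq_mul_sq univ v w

lemma Matrix.IsSymm.dotProduct_mulVec_comm {Q : Matrix ι ι ℝ} (hQ : Q.IsSymm) (x y : ι → ℝ) :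
    x ⬝ᵥ Q *ᵥ y = Q *ᵥ x ⬝ᵥ y := by
  rw [dotProduct_mulVec, ← vecMul_transpose, hQ.eq]

lemma Matrix.IsSymm.mulVec_dotProduct_self_le {Q : Matrix ι ι ℝ} (hQ : Q.IsSymm)
    (hbound : ∀ x, |x ⬝ᵥ Q *ᵥ x| ≤ x ⬝ᵥ x) (x : ι → ℝ) :
    Q *ᵥ x ⬝ᵥ Q *ᵥ x ≤ x ⬝ᵥ x := by
  set y := Q *ᵥ x
  have hpolar : (x + y) ⬝ᵥ Q *ᵥ (x + y) - (x - y) ⬝ᵥ Q *ᵥ (x - y) = 4 * (y ⬝ᵥ y) := by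
    simp only [mulVec_add, mulVec_sub, add_dotProduct, sub_dotProduct, dotProduct_add,
      dotProduct_sub, hQ.dotProduct_mulVec_comm x y, hQ.dotProduct_mulVec_comm y y]
    rw [dotProduct_comm y (Q *ᵥ x)]
    ring
  have hparallelogram :
      (x + y) ⬝ᵥ (x + y) + (x - y) ⬝ᵥ (x - y) = 2 * (x ⬝ᵥ x) + 2 * (y ⬝ᵥ y) := by
    simp only [add_dotProduct, sub_dotProduct, dotProduct_add, dotProduct_sub,
      dotProduct_comm y x]
    ring
  linarith [(abs_le.1 (hbound (x + y))).2, (abs_le.1 (hbound (x - y))).1]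

-- Equality holds for `v = w` with `v ⬝ᵥ v = 3`, which makes the constant `-1/8` below sharp.
lemma four_mul_dotProduct_add_self_le (v w : ι → ℝ) :
    4 * ((v + w) ⬝ᵥ (v + w)) ≤
      (1 + v ⬝ᵥ v) * (1 + w ⬝ᵥ w) + 4 * (2 + v ⬝ᵥ v + w ⬝ᵥ w) := by
  have hexpand : (v + w) ⬝ᵥ (v + w) = v ⬝ᵥ v + 2 * (v ⬝ᵥ w) + w ⬝ᵥ w := by
    simp only [add_dotProduct, dotProduct_add, dotProduct_comm w v]
    ring
  have hdiff : 0 ≤ (v - w) ⬝ᵥ (v - w) := dotProduct_self_nonneg (v - w)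
  simp only [sub_dotProduct, dotProduct_sub, dotProduct_comm w v] at hdiff
  nlinarith [dotProduct_sq_le v w, sq_nonneg (v ⬝ᵥ w - 3)]

end DotProduct

section ForceMatrix

variable {ι : Type*} [Fintype ι] [DecidableEq ι]

noncomputable def forceMatrix (v w : ι → ℝ) : Matrix ι ι ℝ :=
  (2 * (1 + v ⬝ᵥ v) * (1 + w ⬝ᵥ w))⁻¹ •
    ((2 + v ⬝ᵥ v + w ⬝ᵥ w) • 1 - vecMulVec (v + w) (v + w))

lemma forceMatrix_isSymm (v w : ι → ℝ) : (forceMatrix v w).IsSymm := by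
  simp only [forceMatrix, IsSymm, transpose_smul, transpose_sub, transpose_one,
    transpose_vecMulVec]

lemma forceMatrix_mulVec_sub (v w : ι → ℝ) :
    forceMatrix v w *ᵥ (v - w) = (1 + v ⬝ᵥ v)⁻¹ • v - (1 + w ⬝ᵥ w)⁻¹ • w := by
  have ha : 1 + v ⬝ᵥ v ≠ 0 := by linarith [dotProduct_self_nonneg v]
  have hb : 1 + w ⬝ᵥ w ≠ 0 := by linarith [dotProduct_self_nonneg w]
  have hsum : (v + w) ⬝ᵥ (v - w) = v ⬝ᵥ v - w ⬝ᵥ w := by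
    simp only [add_dotProduct, dotProduct_sub, dotProduct_comm w v]
    ring
  simp only [forceMatrix, smul_mulVec, sub_mulVec, one_mulVec, vecMulVec_mulVec, hsum]
  ext i
  simp only [Pi.smul_apply, Pi.sub_apply, Pi.add_apply, smul_eq_mul,
    MulOpposite.smul_eq_mul_unop, MulOpposite.unop_op]
  field_simp
  ring

lemma dotProduct_forceMatrix_mulVec (v w x : ι → ℝ) :
    x ⬝ᵥ forceMatrix v w *ᵥ x =
      ((2 + v ⬝ᵥ v + w ⬝ᵥ w) * (x ⬝ᵥ x) - ((v + w) ⬝ᵥ x) ^ 2) /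
        (2 * (1 + v ⬝ᵥ v) * (1 + w ⬝ᵥ w)) := by
  simp only [forceMatrix, smul_mulVec, sub_mulVec, one_mulVec, vecMulVec_mulVec,
    dotProduct_smul, dotProduct_sub, smul_eq_mul, MulOpposite.smul_eq_mul_unop,
    MulOpposite.unop_op]
  rw [dotProduct_comm x (v + w)]
  ring

lemma dotProduct_forceMatrix_mulVec_le (v w x : ι → ℝ) :
    x ⬝ᵥ forceMatrix v w *ᵥ x ≤ x ⬝ᵥ x := by
  have ha := dotProduct_self_nonneg v
  have hb := dotProduct_self_nonneg w
  have hx := dotProduct_self_nonneg x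
  rw [dotProduct_forceMatrix_mulVec, div_le_iff₀ (by positivity)]
  nlinarith [sq_nonneg ((v + w) ⬝ᵥ x), mul_nonneg (mul_nonneg ha hb) hx,
    mul_nonneg ha hx, mul_nonneg hb hx]

lemma le_dotProduct_forceMatrix_mulVec (v w x : ι → ℝ) :
    -(1 / 8) * (x ⬝ᵥ x) ≤ x ⬝ᵥ forceMatrix v w *ᵥ x := by
  have ha := dotProduct_self_nonneg v
  have hb := dotProduct_self_nonneg w
  have hx := dotProduct_self_nonneg x
  rw [dotProduct_forceMatrix_mulVec, le_div_iff₀ (by positivity)]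
  nlinarith [dotProduct_sq_le (v + w) x,
    mul_le_mul_of_nonneg_right (four_mul_dotProduct_add_self_le v w) hx]

end ForceMatrix

lemma fvec_eq_smul (u : Fin 2 → ℝ) : fvec u = (1 + u ⬝ᵥ u)⁻¹ • u := by
  ext i
  simp only [fvec, sum_sq_eq_dotProduct_self, Pi.smul_apply, smul_eq_mul, div_eq_inv_mul]

theorem stmt9 (v w : Fin 2 → ℝ) :
    (∃ Q : Matrix (Fin 2) (Fin 2) ℝ, Q.IsSymm ∧
      fvec v - fvec w = Q.mulVec (v - w) ∧
      ∀ x : Fin 2 → ℝ,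
        -(1 / 8) * ∑ i, (x i) ^ 2 ≤ ∑ i, x i * Q.mulVec x i ∧
          ∑ i, x i * Q.mulVec x i ≤ ∑ i, (x i) ^ 2) ∧
    Real.sqrt (∑ i, (fvec v i - fvec w i) ^ 2) ≤
      Real.sqrt (∑ i, (v i - w i) ^ 2) := by
  have hdiff : fvec v - fvec w = forceMatrix v w *ᵥ (v - w) := by
    rw [fvec_eq_smul, fvec_eq_smul, forceMatrix_mulVec_sub]
  have hbound (x : Fin 2 → ℝ) : |x ⬝ᵥ forceMatrix v w *ᵥ x| ≤ x ⬝ᵥ x :=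
    abs_le.2 ⟨by linarith [le_dotProduct_forceMatrix_mulVec v w x, dotProduct_self_nonneg x],
      dotProduct_forceMatrix_mulVec_le v w x⟩
  refine ⟨⟨forceMatrix v w, forceMatrix_isSymm v w, hdiff, fun x => ?_⟩, ?_⟩
  · rw [sum_sq_eq_dotProduct_self]
    exact ⟨le_dotProduct_forceMatrix_mulVec v w x, dotProduct_forceMatrix_mulVec_le v w x⟩
  · apply Real.sqrt_le_sqrt
    change ∑ i, (fvec v - fvec w) i ^ 2 ≤ ∑ i, (v - w) i ^ 2
    rw [sum_sq_eq_dotProduct_self, sum_sq_eq_dotProduct_self, hdiff]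
    exact (forceMatrix_isSymm v w).mulVec_dotProduct_self_le hbound (v - w)
end

section
/- For any vectors u, v ∈ ℝ², one has 2(u − v)·u / (1 + |u|²) ≤ ln( (1 + |u|²)/(1 + |v|²) ) + |u − v|², where · denotes the Euclidean inner product and |·| the Euclidean norm on ℝ². -/
/-!
Write `A = 1 + |u|²`, `B = 1 + |v|²`, `D = |u - v|²`. Polarization gives
`2 (u - v)·u = A - B + D`, and the inequality becomes `(A - B)/A + D/A ≤ log (A/B) + D`,
which follows from `1 - x⁻¹ ≤ log x` at `x = A/B` together with `A ≥ 1`.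
-/

open Finset Real

theorem sub_add_div_le_log_div_add {A B D : ℝ} (hA : 1 ≤ A) (hB : 0 < B) (hD : 0 ≤ D) :
    (A - B + D) / A ≤ log (A / B) + D := by
  have hA₀ : 0 < A := one_pos.trans_le hA
  calc (A - B + D) / A = (1 - (A / B)⁻¹) + D / A := by field_simp
    _ ≤ log (A / B) + D :=
      add_le_add (one_sub_inv_le_log_of_pos (div_pos hA₀ hB)) (div_le_self hD hA)

theorem two_mul_sum_sub_mul_eq {ι : Type*} [Fintype ι] (u v : ι → ℝ) :
    2 * ∑ i, (u i - v i) * u i =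
      (1 + ∑ i, u i ^ 2) - (1 + ∑ i, v i ^ 2) + ∑ i, (u i - v i) ^ 2 := by
  have hpoint : ∀ i, 2 * ((u i - v i) * u i) = u i ^ 2 - v i ^ 2 + (u i - v i) ^ 2 :=
    fun i ↦ by ring
  rw [mul_sum, sum_congr rfl fun i _ ↦ hpoint i, sum_add_distrib, sum_sub_distrib]
  ring

theorem stmt13 (u v : Fin 2 → ℝ) :
    2 * (∑ i, (u i - v i) * u i) / (1 + ∑ i, (u i) ^ 2) ≤
      Real.log ((1 + ∑ i, (u i) ^ 2) / (1 + ∑ i, (v i) ^ 2))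
        + ∑ i, (u i - v i) ^ 2 := by
  rw [two_mul_sum_sub_mul_eq]
  exact sub_add_div_le_log_div_add (le_add_of_nonneg_right (by positivity)) (by positivity)
    (by positivity)
end
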